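/- There is a universal constant C > 0 with the following property. Let X be a compact metric space and let 𝓕 be a compact subset of C(X), the Banach space of continuous real-valued functions on X with the sup norm. There exists a prediction strategy producing predictions μₙ with |μₙ| ≤ 1 that guarantees, for every sequence of signals x₁, x₂, … ∈ X and observations y₁, y₂, … ∈ [−1, 1], for all N = 1, 2, … and all F ∈ 𝓕: Σ_{n=1}^N (yₙ − μₙ)² ≤ Σ_{n=1}^N (yₙ − F(xₙ))² + C · inf_{ε∈(0,1/2]} ( H_ε(𝓕) + log₂ log₂ (1/ε) + εN + 1 ), where H_ε(𝓕) is the metric entropy of 𝓕 in the sup-norm metric. -/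

import Mathlib

open scoped BigOperators

universe u

/-- Given a prediction strategy `σ` and sequences of signals `x` and observations `y`,
`preds σ x y n` is the prediction output on round `n`. -/
noncomputable def preds {X P : Type*} (σ : List (X × P) → X → P)
    (x : ℕ → X) (y : ℕ → P) (n : ℕ) : P :=
  σ ((List.range n).map fun i => (x i, y i)) (x n)

/-- The minimal number of points of `A` forming an `ε`-net for `A`. -/
noncomputable def coveringNumber {E : Type*} [MetricSpace E] (A : Set E) (ε : ℝ) : ℕ :=
  sInf {n : ℕ | ∃ S : Finset E, ↑S ⊆ A ∧ S.card = n ∧ ∀ a ∈ A, ∃ b ∈ S, dist a b ≤ ε}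

/-- Metric entropy: binary logarithm of the minimal size of an `ε`-net. -/
noncomputable def metricEntropy {E : Type*} [MetricSpace E] (A : Set E) (ε : ℝ) : ℝ :=
  Real.logb 2 (coveringNumber A ε)

open Real Set


noncomputable def clip (t : ℝ) : ℝ := max (-1) (min 1 t)

lemma clip_abs_le (t : ℝ) : |clip t| ≤ 1 := by
  rw [abs_le]; unfold clip
  exact ⟨le_max_left _ _, max_le (by norm_num) (min_le_left _ _)⟩

lemma clip_lip (a b : ℝ) : |clip a - clip b| ≤ |a - b| := by
  unfold clip
  calc |max (-1) (min 1 a) - max (-1) (min 1 b)| ≤ |min 1 a - min 1 b| := by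
        simpa [max_comm] using abs_max_sub_max_le_abs (min 1 a) (min 1 b) (-1)
    _ ≤ |a - b| := by
        have := abs_min_sub_min_le_max (1:ℝ) a 1 b
        simpa using this

lemma clip_eq_self {a : ℝ} (h1 : -1 ≤ a) (h2 : a ≤ 1) : clip a = a := by
  unfold clip; rw [min_eq_right h2, max_eq_right h1]

lemma clip_closer {y : ℝ} (hy : |y| ≤ 1) (a : ℝ) : (y - clip a)^2 ≤ (y - a)^2 := by
  rw [abs_le] at hy
  rcases le_total a (-1) with h | h
  · have : clip a = -1 := by
      unfold clip; rw [min_eq_right (by linarith), max_eq_left (by linarith)]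
    rw [this]; nlinarith
  · rcases le_total 1 a with h2 | h2
    · have : clip a = 1 := by
        unfold clip; rw [min_eq_left (by linarith), max_eq_right (by linarith)]
      rw [this]; nlinarith
    · rw [clip_eq_self h h2]

lemma tangent {y m z : ℝ} (hy : |y| ≤ 1) (hm : |m| ≤ 1) (hz : |z| ≤ 1) :
    Real.exp (-(y - z)^2/8) ≤ Real.exp (-(y - m)^2/8) * (1 + (y - m) * (z - m) / 4) := by
  set G : ℝ → ℝ := fun t => Real.exp (-(y - t)^2/8) with hG
  set G' : ℝ → ℝ := fun t => ((y - t)/4) * Real.exp (-(y - t)^2/8) with hG'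
  have hd : ∀ t, HasDerivAt G (G' t) t := by
    intro t
    have h0 : HasDerivAt (fun t : ℝ => (y - t)) (-1) t := by
      simpa using (hasDerivAt_id t).const_sub y
    have h1 : HasDerivAt (fun t : ℝ => -(y - t)^2/8) ((y - t)/4) t := by
      have h2 := ((h0.pow 2).div_const (-8))
      have e1 : (fun t : ℝ => -(y - t)^2/8) = fun x => ((fun t => y - t) ^ 2) x / -8 := by
        ext u; simp only [Pi.pow_apply]; ring
      rw [e1]
      exact h2.congr_deriv (by push_cast; ring)
    simpa [hG', mul_comm] using h1.exp
  have hanti : AntitoneOn G' (Icc (-1:ℝ) 1) := by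
    have hd2 : ∀ t, HasDerivAt G' (((y-t)^2/16 - 1/4) * Real.exp (-(y - t)^2/8)) t := by
      intro t
      have h1 : HasDerivAt (fun t : ℝ => (y - t)/4) (-(1/4)) t := by
        have := (((hasDerivAt_id t).const_sub y).div_const 4)
        exact this.congr_deriv (by norm_num)
      have := h1.mul (hd t)
      exact this.congr_deriv (by simp only [hG', hG]; ring)
    apply antitoneOn_of_hasDerivWithinAt_nonpos (convex_Icc _ _)
      (fun t _ => (hd2 t).continuousAt.continuousWithinAt)
      (fun t ht => ((hd2 t).hasDerivWithinAt))
    intro t ht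
    rw [interior_Icc] at ht
    have h1 : (y - t)^2 ≤ 4 := by
      rw [abs_le] at hy; rcases ht with ⟨h2, h3⟩; nlinarith
    have := Real.exp_pos (-(y - t)^2/8)
    nlinarith
  have hmI : m ∈ Icc (-1:ℝ) 1 := by rw [abs_le] at hm; exact ⟨hm.1, hm.2⟩
  have key : G z ≤ G m + G' m * (z - m) := by
    rcases lt_trichotomy m z with h | h | h
    · obtain ⟨c, hc, hceq⟩ := exists_hasDerivAt_eq_slope G G' h
        (fun t _ => (hd t).continuousAt.continuousWithinAt) (fun t _ => hd t)
      have hcI : c ∈ Icc (-1:ℝ) 1 := by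
        rw [abs_le] at hm hz
        exact ⟨by linarith [hc.1], by linarith [hc.2]⟩
      have hcm : G' c ≤ G' m := hanti hmI hcI hc.1.le
      rw [hceq] at hcm
      have := (div_le_iff₀ (by linarith)).mp hcm
      linarith
    · subst h; simp
    · obtain ⟨c, hc, hceq⟩ := exists_hasDerivAt_eq_slope G G' h
        (fun t _ => (hd t).continuousAt.continuousWithinAt) (fun t _ => hd t)
      have hcI : c ∈ Icc (-1:ℝ) 1 := by
        rw [abs_le] at hm hz
        exact ⟨by linarith [hc.1], by linarith [hc.2]⟩
      have hcm : G' m ≤ G' c := hanti hcI hmI hc.2.le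
      rw [hceq] at hcm
      have := (le_div_iff₀ (by linarith)).mp hcm
      linarith
  calc Real.exp (-(y - z)^2/8) = G z := rfl
    _ ≤ G m + G' m * (z - m) := key
    _ = Real.exp (-(y - m)^2/8) * (1 + (y - m) * (z - m) / 4) := by
        simp only [hG, hG']; ring

section EW
variable {I : Type*}

/-- weight of expert `i` after `n` rounds -/
noncomputable def Vw (w : I → ℝ) (e : I → ℕ → ℝ) (y : ℕ → ℝ) (n : ℕ) (i : I) : ℝ :=
  w i * Real.exp (-(1/8) * ∑ m ∈ Finset.range n, (y m - e i m)^2)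

/-- the exponential weights prediction -/
noncomputable def muw (w : I → ℝ) (e : I → ℕ → ℝ) (y : ℕ → ℝ) (n : ℕ) : ℝ :=
  (∑' i, Vw w e y n i * e i n) / (∑' i, Vw w e y n i)

set_option linter.unusedSectionVars false

variable [Nonempty I] {w : I → ℝ} {e : I → ℕ → ℝ} {y : ℕ → ℝ}
variable (hw : ∀ i, 0 < w i) (hsum : Summable w) (hw1 : ∑' i, w i ≤ 1)
  (he : ∀ i n, |e i n| ≤ 1) (hy : ∀ n, |y n| ≤ 1)

section
include hw hsum he hy

lemma Vw_pos (n : ℕ) (i : I) : 0 < Vw w e y n i :=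
  mul_pos (hw i) (Real.exp_pos _)

lemma Vw_le (n : ℕ) (i : I) : Vw w e y n i ≤ w i := by
  have h1 : Real.exp (-(1/8) * ∑ m ∈ Finset.range n, (y m - e i m)^2) ≤ 1 := by
    rw [Real.exp_le_one_iff]
    have : (0:ℝ) ≤ ∑ m ∈ Finset.range n, (y m - e i m)^2 :=
      Finset.sum_nonneg fun m _ => sq_nonneg _
    nlinarith
  calc Vw w e y n i ≤ w i * 1 := by
        exact mul_le_mul_of_nonneg_left h1 (hw i).le
    _ = w i := mul_one _

include hsum

lemma Vw_summable (n : ℕ) : Summable (Vw w e y n) :=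
  Summable.of_nonneg_of_le (fun i => (Vw_pos hw hsum he hy n i).le) (Vw_le hw hsum he hy n) hsum

lemma Vwe_summable (n : ℕ) (c : ℝ) : Summable (fun i => Vw w e y n i * (e i n + c)) := by
  rw [← summable_abs_iff]
  apply Summable.of_nonneg_of_le (fun i => abs_nonneg _) _ (hsum.mul_right (1 + |c|))
  intro i
  rw [abs_mul]
  have h1 : |Vw w e y n i| = Vw w e y n i := abs_of_pos (Vw_pos hw hsum he hy n i)
  rw [h1]
  have h2 : |e i n + c| ≤ 1 + |c| := by
    calc |e i n + c| ≤ |e i n| + |c| := abs_add_le _ _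
      _ ≤ 1 + |c| := by linarith [he i n]
  exact mul_le_mul (Vw_le hw hsum he hy n i) h2 (abs_nonneg _) (hw i).le

lemma Ww_pos (n : ℕ) : 0 < ∑' i, Vw w e y n i :=
  Summable.tsum_pos (Vw_summable hw hsum he hy n) (fun i => (Vw_pos hw hsum he hy n i).le)
    (Classical.arbitrary I) (Vw_pos hw hsum he hy n _)

lemma muw_abs_le (n : ℕ) : |muw w e y n| ≤ 1 := by
  have hW := Ww_pos hw hsum he hy (e := e) (y := y) n
  rw [muw, abs_div, abs_of_pos hW, div_le_one hW]
  have h0 : (fun i => Vw w e y n i * (e i n + 0)) = fun i => Vw w e y n i * e i n := by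
    ext i; ring
  have hs : Summable (fun i => Vw w e y n i * e i n) := by
    rw [← h0]; exact Vwe_summable hw hsum he hy n 0
  rw [abs_le]
  constructor
  · rw [neg_le]
    have : ∑' i, -(Vw w e y n i * e i n) ≤ ∑' i, Vw w e y n i := by
      apply Summable.tsum_le_tsum _ hs.neg (Vw_summable hw hsum he hy n)
      intro i
      have h1 := (Vw_pos hw hsum he hy n i).le
      have h2 := (abs_le.mp (he i n)).1
      nlinarith
    rwa [tsum_neg] at this
  · apply Summable.tsum_le_tsum _ hs (Vw_summable hw hsum he hy n)
    intro i
    have h1 := (Vw_pos hw hsum he hy n i).le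
    have h2 := (abs_le.mp (he i n)).2
    nlinarith

lemma Ww_step (n : ℕ) :
    ∑' i, Vw w e y (n+1) i ≤
      (∑' i, Vw w e y n i) * Real.exp (-(y n - muw w e y n)^2/8) := by
  have hW := Ww_pos hw hsum he hy (e := e) (y := y) n
  have hmu := muw_abs_le hw hsum he hy (y := y) n
  set μ := muw w e y n with hμ
  have hnum : ∑' i, Vw w e y n i * e i n = μ * ∑' i, Vw w e y n i := by
    rw [hμ, muw, div_mul_cancel₀ _ hW.ne']
  have hstep : ∀ i, Vw w e y (n+1) i = Vw w e y n i * Real.exp (-(y n - e i n)^2/8) := by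
    intro i
    rw [Vw, Vw, Finset.sum_range_succ, mul_assoc, ← Real.exp_add]
    congr 2
    ring
  have hpt : ∀ i, Vw w e y (n+1) i ≤
      Vw w e y n i * (Real.exp (-(y n - μ)^2/8) * (1 + (y n - μ) * (e i n - μ) / 4)) := by
    intro i
    rw [hstep i]
    exact mul_le_mul_of_nonneg_left (tangent (hy n) hmu (he i n)) (Vw_pos hw hsum he hy n i).le
  have hrs : Summable (fun i => Vw w e y n i *
      (Real.exp (-(y n - μ)^2/8) * (1 + (y n - μ) * (e i n - μ) / 4))) := by
    have h1 : (fun i => Vw w e y n i *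
        (Real.exp (-(y n - μ)^2/8) * (1 + (y n - μ) * (e i n - μ) / 4)))
        = fun i => (Real.exp (-(y n - μ)^2/8) * ((y n - μ)/4)) * (Vw w e y n i * e i n)
          + (Real.exp (-(y n - μ)^2/8) * (1 - (y n - μ) * μ / 4)) * Vw w e y n i := by
      ext i; ring
    rw [h1]
    have hs0 : Summable (fun i => Vw w e y n i * e i n) := by
      have h0 : (fun i => Vw w e y n i * (e i n + 0)) = fun i => Vw w e y n i * e i n := by
        ext i; ring
      rw [← h0]; exact Vwe_summable hw hsum he hy n 0
    exact (hs0.mul_left _).add ((Vw_summable hw hsum he hy n).mul_left _)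
  have hls : Summable (Vw w e y (n+1)) := Vw_summable hw hsum he hy (n+1)
  have h2 := Summable.tsum_le_tsum hpt hls hrs
  refine h2.trans (le_of_eq ?_)
  have h3 : ∀ i, Vw w e y n i *
      (Real.exp (-(y n - μ)^2/8) * (1 + (y n - μ) * (e i n - μ) / 4))
      = (Real.exp (-(y n - μ)^2/8) * ((y n - μ)/4)) * (Vw w e y n i * e i n)
        + (Real.exp (-(y n - μ)^2/8) * (1 - (y n - μ) * μ / 4)) * Vw w e y n i := by
    intro i; ring
  rw [tsum_congr h3, Summable.tsum_add ((by
      have h0 : (fun i => Vw w e y n i * (e i n + 0)) = fun i => Vw w e y n i * e i n := by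
        ext i; ring
      rw [← h0]; exact Vwe_summable hw hsum he hy n 0 : Summable (fun i => Vw w e y n i * e i n)).mul_left _)
    ((Vw_summable hw hsum he hy n).mul_left _), tsum_mul_left, tsum_mul_left, hnum]
  ring

lemma Ww_bound (N : ℕ) :
    ∑' i, Vw w e y N i ≤ (∑' i, w i) *
      Real.exp (-(1/8) * ∑ n ∈ Finset.range N, (y n - muw w e y n)^2) := by
  induction N with
  | zero =>
      simp only [Finset.range_zero, Finset.sum_empty, mul_zero, Real.exp_zero, mul_one]
      apply le_of_eq
      apply tsum_congr
      intro i
      rw [Vw]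
      simp
  | succ n ih =>
      calc ∑' i, Vw w e y (n+1) i
          ≤ (∑' i, Vw w e y n i) * Real.exp (-(y n - muw w e y n)^2/8) :=
            Ww_step hw hsum he hy n
        _ ≤ ((∑' i, w i) * Real.exp (-(1/8) * ∑ m ∈ Finset.range n, (y m - muw w e y m)^2))
              * Real.exp (-(y n - muw w e y n)^2/8) :=
            mul_le_mul_of_nonneg_right ih (Real.exp_pos _).le
        _ = (∑' i, w i) * Real.exp (-(1/8) * ∑ m ∈ Finset.range (n+1), (y m - muw w e y m)^2) := by
            rw [mul_assoc, ← Real.exp_add, Finset.sum_range_succ]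
            congr 2
            ring

include hw1

/-- Main EW regret bound: against each expert `i`, regret at most `8 log (1/w i)`. -/
lemma ew_regret (N : ℕ) (i : I) :
    ∑ n ∈ Finset.range N, (y n - muw w e y n)^2 ≤
      ∑ n ∈ Finset.range N, (y n - e i n)^2 + 8 * Real.log (1 / w i) := by
  have h1 : Vw w e y N i ≤ ∑' j, Vw w e y N j :=
    Summable.le_tsum (Vw_summable hw hsum he hy N) i fun j _ => (Vw_pos hw hsum he hy N j).le
  have h2 := Ww_bound hw hsum he hy (N := N)
  have h3 : Vw w e y N i ≤ Real.exp (-(1/8) * ∑ n ∈ Finset.range N, (y n - muw w e y n)^2) := by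
    refine h1.trans (h2.trans ?_)
    have := Real.exp_pos (-(1/8) * ∑ n ∈ Finset.range N, (y n - muw w e y n)^2)
    nlinarith
  rw [Vw] at h3
  have h4 := Real.log_le_log (mul_pos (hw i) (Real.exp_pos _)) h3
  rw [Real.log_mul (hw i).ne' (Real.exp_pos _).ne', Real.log_exp, Real.log_exp] at h4
  rw [one_div, Real.log_inv]
  linarith

end
end EW

lemma net_set_nonempty {E : Type*} [MetricSpace E] {A : Set E} (hA : IsCompact A) {ε : ℝ}
    (hε : 0 < ε) :
    {n : ℕ | ∃ S : Finset E, ↑S ⊆ A ∧ S.card = n ∧ ∀ a ∈ A, ∃ b ∈ S, dist a b ≤ ε}.Nonempty := by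
  classical
  have htb := hA.totallyBounded
  rw [totallyBounded_iff_subset] at htb
  obtain ⟨t, hts, htf, htc⟩ := htb _ (Metric.dist_mem_uniformity hε)
  refine ⟨htf.toFinset.card, htf.toFinset, ?_, rfl, ?_⟩
  · intro a ha
    simp only [Finset.mem_coe, Set.Finite.mem_toFinset] at ha
    exact hts ha
  · intro a ha
    obtain ⟨b, hb, hab⟩ := Set.mem_iUnion₂.mp (htc ha)
    exact ⟨b, htf.mem_toFinset.mpr hb, le_of_lt hab⟩

lemma net_exists {E : Type*} [MetricSpace E] {A : Set E} (hA : IsCompact A) {ε : ℝ}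
    (hε : 0 < ε) :
    ∃ S : Finset E, ↑S ⊆ A ∧ S.card = coveringNumber A ε ∧ ∀ a ∈ A, ∃ b ∈ S, dist a b ≤ ε := by
  have := Nat.sInf_mem (net_set_nonempty hA hε)
  obtain ⟨S, h1, h2, h3⟩ := this
  exact ⟨S, h1, h2, h3⟩

lemma coveringNumber_anti {E : Type*} [MetricSpace E] {A : Set E} (hA : IsCompact A)
    {ε ε' : ℝ} (h0 : 0 < ε) (h : ε ≤ ε') : coveringNumber A ε' ≤ coveringNumber A ε := by
  obtain ⟨S, h1, h2, h3⟩ := net_exists hA h0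
  rw [← h2]
  exact Nat.sInf_le ⟨S, h1, rfl, fun a ha => by
    obtain ⟨b, hb, hab⟩ := h3 a ha; exact ⟨b, hb, hab.trans h⟩⟩

lemma sum_telescope_frac (n : ℕ) :
    ∑ k ∈ Finset.range n, (1:ℝ) / ((k+1) * (k+2)) = 1 - 1/(n+1) := by
  induction n with
  | zero => simp
  | succ m ih =>
      rw [Finset.sum_range_succ, ih]
      have h1 : ((m:ℝ)+1) ≠ 0 := by positivity
      have h2 : ((m:ℝ)+2) ≠ 0 := by positivity
      push_cast
      field_simp
      ring

lemma list_range_map_sum (f : ℕ → ℝ) (n : ℕ) :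
    ((List.range n).map f).sum = ∑ i ∈ Finset.range n, f i := by
  induction n with
  | zero => simp
  | succ m ih => rw [List.range_succ, List.map_append, List.sum_append, Finset.sum_range_succ, ih]; simp

lemma approx_step {y a b : ℝ} (hy : |y| ≤ 1) {δ : ℝ} (hd : |a - b| ≤ δ) :
    (y - clip b)^2 ≤ (y - a)^2 + 4*δ := by
  have h1 : |clip a - clip b| ≤ δ := (clip_lip a b).trans hd
  have h2 : (y - clip a)^2 ≤ (y - a)^2 := clip_closer hy a
  have h3 := clip_abs_le a
  have h4 := clip_abs_le b
  rw [abs_le] at h1 h3 h4 hy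
  nlinarith

set_option maxHeartbeats 1600000 in
/-- Theorem 2: regret bound for a compact benchmark class `𝓕 ⊆ C(X)`. -/
theorem stmt2 : ∃ C : ℝ, 0 < C ∧
    ∀ (X : Type u) [MetricSpace X] [CompactSpace X] (𝓕 : Set C(X, ℝ)),
      IsCompact 𝓕 →
      ∃ σ : List (X × ℝ) → X → ℝ,
        ∀ x : ℕ → X, ∀ y : ℕ → ℝ, (∀ n, y n ∈ Set.Icc (-1 : ℝ) 1) →
          (∀ n, |preds σ x y n| ≤ 1) ∧
          ∀ N : ℕ, ∀ F ∈ 𝓕,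
            ∑ n ∈ Finset.range N, (y n - preds σ x y n) ^ 2 ≤
              ∑ n ∈ Finset.range N, (y n - F (x n)) ^ 2 +
                C * sInf ((fun ε : ℝ =>
                  metricEntropy 𝓕 ε + Real.logb 2 (Real.logb 2 (1 / ε)) +
                    ε * N + 1) '' Set.Ioc 0 (1 / 2)) := by
  simp only [preds]
  classical
  refine ⟨16, by norm_num, ?_⟩
  intro X _ _ 𝓕 h𝓕c
  by_cases hne : 𝓕.Nonempty
  swap
  · refine ⟨fun _ _ => 0, ?_⟩
    intro x y hy
    refine ⟨fun n => by simp, ?_⟩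
    intro N F hF
    exact absurd ⟨F, hF⟩ hne
  -- nets at scales (1/2)^(k+1)
  have hnets : ∀ k : ℕ, ∃ S : Finset C(X,ℝ), ↑S ⊆ 𝓕 ∧
      S.card = coveringNumber 𝓕 ((1/2:ℝ)^(k+1)) ∧
      ∀ a ∈ 𝓕, ∃ b ∈ S, dist a b ≤ (1/2:ℝ)^(k+1) :=
    fun k => net_exists h𝓕c (by positivity)
  choose S hSsub hScard hSnet using hnets
  have hSne : ∀ k, (S k).Nonempty := by
    intro k
    obtain ⟨F0, hF0⟩ := hne
    obtain ⟨b, hb, _⟩ := hSnet k F0 hF0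
    exact ⟨b, hb⟩
  have hcard_pos : ∀ k, 0 < ((S k).card : ℝ) := by
    intro k; exact_mod_cast Finset.card_pos.mpr (hSne k)
  set I := Σ k : ℕ, {g : C(X,ℝ) // g ∈ S k} with hI
  haveI : Nonempty I := ⟨⟨0, ⟨(hSne 0).choose, (hSne 0).choose_spec⟩⟩⟩
  set w : I → ℝ := fun i => 1 / (((i.1:ℝ)+1) * ((i.1:ℝ)+2) * ((S i.1).card : ℝ)) with hwdef
  have hw : ∀ i, 0 < w i := by
    intro i
    have := hcard_pos i.1
    rw [hwdef]
    positivity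
  -- fiberwise sums
  have hfiber : ∀ k : ℕ, ∑' c : {g : C(X,ℝ) // g ∈ S k}, w ⟨k, c⟩
      = 1 / (((k:ℝ)+1) * ((k:ℝ)+2)) := by
    intro k
    rw [tsum_fintype]
    simp only [hwdef]
    rw [Finset.sum_const, Finset.card_univ, Fintype.card_coe, nsmul_eq_mul]
    have h1 := hcard_pos k
    field_simp
  have hfrac_summable : Summable (fun k : ℕ => 1 / (((k:ℝ)+1) * ((k:ℝ)+2))) := by
    have h2 : Summable (fun k : ℕ => 1 / ((k:ℝ)+1)^2) := by
      have := (summable_nat_add_iff (f := fun n : ℕ => 1 / (n:ℝ)^2) 1).mpr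
        (Real.summable_one_div_nat_pow.mpr (by norm_num))
      simpa using this
    apply Summable.of_nonneg_of_le (fun k => by positivity) _ h2
    intro k
    have h3 : (0:ℝ) < (k:ℝ)+1 := by positivity
    have h4 : ((k:ℝ)+1)^2 ≤ ((k:ℝ)+1) * ((k:ℝ)+2) := by nlinarith
    apply one_div_le_one_div_of_le (by positivity) h4
  have hsum : Summable w := by
    apply (summable_sigma_of_nonneg (fun i => (hw i).le)).mpr
    refine ⟨fun k => Summable.of_finite, ?_⟩
    apply Summable.congr hfrac_summable
    intro k
    exact (hfiber k).symm
  have hw1 : ∑' i, w i ≤ 1 := by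
    rw [hsum.tsum_sigma]
    have := tsum_congr (L := SummationFilter.unconditional ℕ) hfiber
    rw [this]
    apply tsum_le_of_sum_range_le (fun k => by positivity)
    intro n
    rw [sum_telescope_frac]
    have : (0:ℝ) < (n:ℝ)+1 := by positivity
    have : 0 ≤ 1/((n:ℝ)+1) := by positivity
    linarith
  -- the strategy
  set gm : I → C(X,ℝ) := fun i => i.2.1 with hgm
  set σ : List (X × ℝ) → X → ℝ := fun h x0 =>
    (∑' i : I, (w i * Real.exp (-(1/8) *
        ((h.map (fun p => (p.2 - clip (gm i p.1))^2)).sum))) * clip (gm i x0)) /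
    (∑' i : I, w i * Real.exp (-(1/8) *
        ((h.map (fun p => (p.2 - clip (gm i p.1))^2)).sum))) with hσ
  refine ⟨σ, ?_⟩
  intro x y hy'
  have hy : ∀ n, |y n| ≤ 1 := fun n => abs_le.mpr ⟨(hy' n).1, (hy' n).2⟩
  set e : I → ℕ → ℝ := fun i n => clip (gm i (x n)) with he_def
  have he : ∀ i n, |e i n| ≤ 1 := fun i n => clip_abs_le _
  have hpred : ∀ n, σ ((List.range n).map fun i => (x i, y i)) (x n) = muw w e y n := by
    intro n
    rw [hσ, muw]
    have hls : ∀ i : I, ((((List.range n).map fun m => (x m, y m)).map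
        (fun p => (p.2 - clip (gm i p.1))^2)).sum)
        = ∑ m ∈ Finset.range n, (y m - e i m)^2 := by
      intro i
      rw [List.map_map]
      exact list_range_map_sum _ n
    simp only [hls]
    rfl
  constructor
  · intro n; rw [hpred n]; exact muw_abs_le hw hsum he hy n
  intro N F hF
  -- the per-ε bound
  have key : ∀ ε ∈ Set.Ioc (0:ℝ) (1/2),
      ∑ n ∈ Finset.range N, (y n - muw w e y n)^2 ≤
        ∑ n ∈ Finset.range N, (y n - F (x n))^2 +
          16 * (metricEntropy 𝓕 ε + Real.logb 2 (Real.logb 2 (1/ε)) + ε * N + 1) := by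
    intro ε hε
    obtain ⟨hε0, hε2⟩ := hε
    -- choose the scale k
    have hex : ∃ m : ℕ, (1/2:ℝ)^(m+2) < ε := by
      obtain ⟨n, hn⟩ := exists_pow_lt_of_lt_one hε0 (by norm_num : (1/2:ℝ) < 1)
      exact ⟨n, lt_of_le_of_lt
        (pow_le_pow_of_le_one (by norm_num) (by norm_num) (by omega)) hn⟩
    set k := Nat.find hex with hk
    have hk2 : (1/2:ℝ)^(k+2) < ε := Nat.find_spec hex
    have hk1 : ε ≤ (1/2:ℝ)^(k+1) := by
      rcases Nat.eq_zero_or_pos k with h | h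
      · rw [h]; norm_num; linarith
      · have hmin := Nat.find_min hex (m := k-1) (by omega)
        rw [not_lt] at hmin
        have heq : (k-1)+2 = k+1 := by omega
        rwa [heq] at hmin
    obtain ⟨g, hg, hgd⟩ := hSnet k F hF
    set i : I := ⟨k, ⟨g, hg⟩⟩ with hi
    have hregret := ew_regret hw hsum hw1 he hy N i
    -- loss comparison
    have happrox : ∑ n ∈ Finset.range N, (y n - e i n)^2 ≤
        ∑ n ∈ Finset.range N, (y n - F (x n))^2 + 8 * ε * N := by
      have hstep : ∀ n, (y n - e i n)^2 ≤ (y n - F (x n))^2 + 8 * ε := by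
        intro n
        have hd : |F (x n) - g (x n)| ≤ (1/2:ℝ)^(k+1) := by
          have h1 := ContinuousMap.dist_apply_le_dist (f := F) (g := g) (x n)
          rw [Real.dist_eq] at h1
          exact h1.trans hgd
        have h2 : (y n - clip (g (x n)))^2 ≤ (y n - F (x n))^2 + 4 * ((1/2:ℝ)^(k+1)) :=
          approx_step (hy n) hd
        have h3 : (1/2:ℝ)^(k+1) ≤ 2 * ε := by
          have : (1/2:ℝ)^(k+2) = (1/2) * (1/2)^(k+1) := by ring
          nlinarith [hk2]
        have h4 : e i n = clip (g (x n)) := rfl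
        rw [h4]
        linarith
      calc ∑ n ∈ Finset.range N, (y n - e i n)^2
          ≤ ∑ n ∈ Finset.range N, ((y n - F (x n))^2 + 8 * ε) :=
            Finset.sum_le_sum (fun n _ => hstep n)
        _ = ∑ n ∈ Finset.range N, (y n - F (x n))^2 + 8 * ε * N := by
            rw [Finset.sum_add_distrib, Finset.sum_const, Finset.card_range, nsmul_eq_mul]
            ring
    -- weight bound
    have hwlog : 8 * Real.log (1 / w i) ≤
        16 * (metricEntropy 𝓕 ε + Real.logb 2 (Real.logb 2 (1/ε)) + 1) := by
      have hci : (S k).card = coveringNumber 𝓕 ((1/2:ℝ)^(k+1)) := hScard k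
      have hcpos := hcard_pos k
      have hNε_ge : ((S k).card : ℝ) ≤ (coveringNumber 𝓕 ε : ℝ) := by
        rw [hci]
        exact_mod_cast coveringNumber_anti h𝓕c hε0 hk1
      have hNεpos : (0:ℝ) < (coveringNumber 𝓕 ε : ℝ) := lt_of_lt_of_le hcpos hNε_ge
      have h1w : 1 / w i = ((k:ℝ)+1) * ((k:ℝ)+2) * ((S k).card : ℝ) := by
        rw [hwdef, one_div_one_div]
      set t := Real.logb 2 (1/ε) with htdef
      have h2ε : (2:ℝ) ≤ 1/ε := by
        rw [le_div_iff₀ hε0]; linarith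
      have ht1 : 1 ≤ t := by
        rw [htdef]
        calc (1:ℝ) = Real.logb 2 2 := (Real.logb_self_eq_one (by norm_num : (1:ℝ) < 2)).symm
          _ ≤ Real.logb 2 (1/ε) := Real.logb_le_logb_of_le (by norm_num) (by norm_num) h2ε
      have hkt : (k:ℝ) + 1 ≤ t := by
        have h1 : (2:ℝ)^(k+1) ≤ 1/ε := by
          rw [le_div_iff₀ hε0]
          have : ((1:ℝ)/2)^(k+1) * (2:ℝ)^(k+1) = 1 := by
            rw [← mul_pow]; norm_num
          nlinarith [pow_pos (show (0:ℝ) < 1/2 by norm_num) (k+1), hk1,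
            pow_pos (show (0:ℝ) < 2 by norm_num) (k+1)]
        calc (k:ℝ) + 1 = Real.logb 2 ((2:ℝ)^(k+1)) := by
              rw [Real.logb_pow, Real.logb_self_eq_one (by norm_num : (1:ℝ) < 2)]
              push_cast; ring
          _ ≤ t := Real.logb_le_logb_of_le (by norm_num) (by positivity) h1
      set LL := Real.logb 2 t with hLLdef
      have hLL0 : 0 ≤ LL := by
        rw [hLLdef]
        apply Real.logb_nonneg (by norm_num) ht1
      have hlogt : Real.log t = Real.log 2 * LL := by
        rw [hLLdef, Real.logb, mul_div_cancel₀]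
        exact Real.log_ne_zero_of_pos_of_ne_one (by norm_num) (by norm_num)
      set H := metricEntropy 𝓕 ε with hHdef
      have hH0 : 0 ≤ H := by
        rw [hHdef, metricEntropy]
        apply Real.logb_nonneg (by norm_num : (1:ℝ) < 2)
        have hc1 : 1 ≤ (S k).card := Finset.card_pos.mpr (hSne k)
        have hc1' : (1:ℝ) ≤ ((S k).card : ℝ) := by exact_mod_cast hc1
        exact le_trans hc1' hNε_ge
      have hlogN : Real.log ((S k).card : ℝ) ≤ Real.log 2 * H := by
        rw [hHdef, metricEntropy, Real.logb, mul_div_cancel₀]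
        · exact Real.log_le_log hcpos hNε_ge
        · exact Real.log_ne_zero_of_pos_of_ne_one (by norm_num) (by norm_num)
      have hlogk1 : Real.log ((k:ℝ)+1) ≤ Real.log 2 * LL := by
        rw [← hlogt]
        apply Real.log_le_log (by positivity)
        linarith
      have hlogk2 : Real.log ((k:ℝ)+2) ≤ Real.log 2 + Real.log 2 * LL := by
        have h5 : (k:ℝ)+2 ≤ 2*t := by nlinarith
        calc Real.log ((k:ℝ)+2) ≤ Real.log (2*t) := Real.log_le_log (by positivity) h5
          _ = Real.log 2 + Real.log t := Real.log_mul (by norm_num) (by linarith)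
          _ = Real.log 2 + Real.log 2 * LL := by rw [hlogt]
      have hlogsplit : Real.log (1 / w i) =
          Real.log ((k:ℝ)+1) + Real.log ((k:ℝ)+2) + Real.log ((S k).card : ℝ) := by
        rw [h1w, Real.log_mul (by positivity) (by positivity),
          Real.log_mul (by positivity) (by positivity)]
      have hlog2 : Real.log 2 ≤ 1 := by
        have := Real.log_two_lt_d9
        linarith
      have hlog2' : 0 < Real.log 2 := Real.log_pos (by norm_num)
      rw [hlogsplit]
      nlinarith [mul_le_mul_of_nonneg_right hlog2 hLL0, mul_le_mul_of_nonneg_right hlog2 hH0]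
    have hεN : 0 ≤ ε * N := by positivity
    calc ∑ n ∈ Finset.range N, (y n - muw w e y n)^2
        ≤ ∑ n ∈ Finset.range N, (y n - e i n)^2 + 8 * Real.log (1 / w i) := hregret
      _ ≤ ∑ n ∈ Finset.range N, (y n - F (x n))^2 + 8 * ε * N +
            16 * (metricEntropy 𝓕 ε + Real.logb 2 (Real.logb 2 (1/ε)) + 1) := by linarith
      _ ≤ ∑ n ∈ Finset.range N, (y n - F (x n))^2 +
            16 * (metricEntropy 𝓕 ε + Real.logb 2 (Real.logb 2 (1/ε)) + ε * N + 1) := by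
          linarith
  -- pass to the infimum
  have himg : ((fun ε : ℝ => metricEntropy 𝓕 ε + Real.logb 2 (Real.logb 2 (1/ε)) +
      ε * N + 1) '' Set.Ioc 0 (1/2)).Nonempty :=
    ⟨_, ⟨1/2, ⟨by norm_num, le_refl _⟩, rfl⟩⟩
  have hlb : (∑ n ∈ Finset.range N, (y n - muw w e y n)^2 -
      ∑ n ∈ Finset.range N, (y n - F (x n))^2) / 16 ≤
      sInf ((fun ε : ℝ => metricEntropy 𝓕 ε + Real.logb 2 (Real.logb 2 (1/ε)) +
        ε * N + 1) '' Set.Ioc 0 (1/2)) := by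
    apply le_csInf himg
    rintro v ⟨ε, hε, rfl⟩
    have := key ε hε
    rw [div_le_iff₀ (by norm_num : (0:ℝ) < 16)]
    linarith
  have h16 : ∑ n ∈ Finset.range N, (y n - muw w e y n)^2 ≤
      ∑ n ∈ Finset.range N, (y n - F (x n))^2 +
        16 * sInf ((fun ε : ℝ => metricEntropy 𝓕 ε + Real.logb 2 (Real.logb 2 (1/ε)) +
          ε * N + 1) '' Set.Ioc 0 (1/2)) := by
    rw [div_le_iff₀ (by norm_num : (0:ℝ) < 16)] at hlb
    linarith
  calc ∑ n ∈ Finset.range N, (y n - σ ((List.range n).map fun m => (x m, y m)) (x n))^2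
      = ∑ n ∈ Finset.range N, (y n - muw w e y n)^2 := by
        apply Finset.sum_congr rfl
        intro n _
        rw [hpred n]
    _ ≤ _ := h16
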